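/- The Shannon graph with vertex set V(Σ), the set of nonempty closed subsets of Σ^ℕ, with transition rules τ_σ(V) = {ι⁻(v) : v ∈ V, v_1 = σ} for V containing a sequence beginning with σ, is forward separated: the forward context Γ⁺(V) of a vertex V equals V itself, hence distinct vertices have distinct forward contexts. -/
import Mathlib


/-- Removing the first symbol of a one-sided sequence. -/
def tailSeq {A : Type*} (v : ℕ → A) : ℕ → A := fun n => v (n + 1)

/-- The transition rule `τ_σ` on subsets of `Σ^ℕ`:
`τ_σ(V) = {ι⁻ v | v ∈ V, v₁ = σ}`. -/
def tauSet {A : Type*} (σ : A) (V : Set (ℕ → A)) : Set (ℕ → A) :=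
  tailSeq '' {v ∈ V | v 0 = σ}

/-- The forward context of a vertex `V₀` of the Shannon graph on `V(Σ)`: the label
sequences `ω` of semi-infinite paths leaving `V₀`; the edge labeled `ω n` exists at
the `n`-th step exactly when the target `τ_{ω n}(W n)` is nonempty. -/
def gammaPlusVSigma {A : Type*} (V₀ : Set (ℕ → A)) : Set (ℕ → A) :=
  {ω | ∃ W : ℕ → Set (ℕ → A), W 0 = V₀ ∧
    ∀ n : ℕ, (W (n + 1)).Nonempty ∧ W (n + 1) = tauSet (ω n) (W n)}

/-- Iterated tail. -/
def tailIter {A : Type*} (n : ℕ) (v : ℕ → A) : ℕ → A := fun k => v (k + n)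

/-- the Shannon graph with vertex set `V(Σ)`, the nonempty closed
subsets of `Σ^ℕ`, and transitions `τ_σ`, is forward separated: the forward context
of a vertex `V` equals `V` itself, and hence distinct vertices have distinct forward
contexts. -/
theorem vSigma_forward_separated
    {A : Type*} [Fintype A] [TopologicalSpace A] [DiscreteTopology A] :
    (∀ V : Set (ℕ → A), V.Nonempty → IsClosed V → gammaPlusVSigma V = V) ∧
    Set.InjOn gammaPlusVSigma {V : Set (ℕ → A) | V.Nonempty ∧ IsClosed V} := by
  have main : ∀ V : Set (ℕ → A), V.Nonempty → IsClosed V → gammaPlusVSigma V = V := by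
    intro V hne hcl
    apply Set.Subset.antisymm
    · rintro ω ⟨W, hW0, hW⟩
      -- key: elements of W n come from elements of V agreeing with ω on the first n symbols
      have key : ∀ n, ∀ w ∈ W n, ∃ v ∈ V, (∀ i < n, v i = ω i) ∧ ∀ k, v (k + n) = w k := by
        intro n
        induction n with
        | zero =>
          intro w hw
          exact ⟨w, hW0 ▸ hw, fun i hi => absurd hi (Nat.not_lt_zero i), fun k => rfl⟩
        | succ n ih =>
          intro w hw
          rw [(hW n).2] at hw
          obtain ⟨u, ⟨huW, hu0⟩, htail⟩ := hw
          obtain ⟨v, hvV, hvω, hvtail⟩ := ih u huW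
          refine ⟨v, hvV, ?_, ?_⟩
          · intro i hi
            rcases Nat.lt_succ_iff_lt_or_eq.mp hi with hi' | rfl
            · exact hvω i hi'
            · have := hvtail 0
              simpa [hu0] using this
          · intro k
            have h1 : v (k + (n + 1)) = u (k + 1) := by
              have := hvtail (k + 1)
              simpa [Nat.add_comm, Nat.add_assoc, Nat.add_left_comm] using this
            rw [h1, ← htail]
            rfl
      -- a sequence in V agreeing with ω on longer and longer prefixes
      have exv : ∀ n : ℕ, ∃ v ∈ V, ∀ i < n + 1, v i = ω i := by
        intro n
        obtain ⟨w, hw⟩ := (hW n).1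
        obtain ⟨v, hvV, hvω, _⟩ := key (n + 1) w hw
        exact ⟨v, hvV, hvω⟩
      choose v hvV hvω using exv
      have htend : Filter.Tendsto v Filter.atTop (nhds ω) := by
        rw [tendsto_pi_nhds]
        intro i
        have : ∀ᶠ n in Filter.atTop, v n i = ω i := by
          filter_upwards [Filter.eventually_ge_atTop i] with n hn
          exact hvω n i (Nat.lt_succ_of_le hn)
        exact Filter.Tendsto.congr' (Filter.EventuallyEq.symm this) tendsto_const_nhds
      exact hcl.mem_of_tendsto htend (Filter.Eventually.of_forall hvV)
    · intro ω hω
      refine ⟨fun n => Nat.rec V (fun n Wn => tauSet (ω n) Wn) n, rfl, ?_⟩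
      have hmem : ∀ n, tailIter n ω ∈ (Nat.rec V (fun n Wn => tauSet (ω n) Wn) n : Set (ℕ → A)) := by
        intro n
        induction n with
        | zero => exact hω
        | succ n ih =>
          refine ⟨tailIter n ω, ⟨ih, by simp [tailIter]⟩, ?_⟩
          funext k
          show ω (k + 1 + n) = ω (k + (n + 1))
          ring_nf
      intro n
      exact ⟨⟨tailIter (n + 1) ω, hmem (n + 1)⟩, rfl⟩
  refine ⟨main, ?_⟩
  intro V ⟨hVne, hVcl⟩ W ⟨hWne, hWcl⟩ h
  rw [← main V hVne hVcl, ← main W hWne hWcl, h]
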